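/- arXiv:1610.04043 — 3 statements merged into one kernel-verified Lean document; each statement's English description precedes it below -/
import Mathlib

section
/- The move maps of the infinite-bin model are monotone: for all admissible configurations X ≼ Y (meaning N(X,j) ≤ N(Y,j) for all j ∈ ℤ) and all 1 ≤ ξ ≤ ξ' ≤ ∞, we have Φ_{ξ'}(X) ≼ Φ_ξ(Y). -/
open scoped Classical

/-- A configuration of the infinite-bin model: number of balls in each bin. -/
abbrev Config := ℤ → ℕ∞

/-- Admissible configuration: nonempty bins form a semi-infinite interval, and
every bin to the left of an infinite bin is infinite. -/
def IsAdmissible (X : Config) : Prop :=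
  (∃ m : ℤ, ∀ j : ℤ, X j ≠ 0 ↔ j ≤ m) ∧ ∀ j : ℤ, X j = ⊤ → X (j - 1) = ⊤

/-- N(X,k): number of balls in bins of index ≥ k. -/
noncomputable def Nballs (X : Config) (k : ℤ) : ℕ∞ := ∑' j : {j : ℤ // k ≤ j}, X j

/-- B(X,ξ): leftmost position such that there are fewer than ξ balls to its right. -/
noncomputable def Bpos (X : Config) (ξ : ℕ) : ℤ := sInf {j : ℤ | Nballs X j < (ξ : ℕ∞)}

/-- The move of type ξ: add one ball in the bin of index B(X,ξ). -/
noncomputable def Phi (ξ : ℕ) (X : Config) : Config :=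
  fun j => X j + (if j = Bpos X ξ then 1 else 0)

/-- The move of type ξ ∈ ℕ ∪ {∞}, with Φ_∞ = id. -/
noncomputable def PhiE (ξ : ℕ∞) (X : Config) : Config :=
  if ξ = ⊤ then X else Phi ξ.toNat X

/-- The shift operator τ. -/
def shift (X : Config) : Config := fun j => X (j - 1)

/-- The partial order on configurations: X ≼ Y iff N(X,j) ≤ N(Y,j) for all j. -/
def ConfLE (X Y : Config) : Prop := ∀ j : ℤ, Nballs X j ≤ Nballs Y j

lemma enat_hasSum {ι : Type*} (f : ι → ℕ∞) :
    HasSum f (⨆ s : Finset ι, ∑ i ∈ s, f i) :=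
  tendsto_atTop_iSup fun _ _ hst => Finset.sum_le_sum_of_subset hst

lemma enat_summable {ι : Type*} (f : ι → ℕ∞) : Summable f := ⟨_, enat_hasSum f⟩

lemma Nballs_antitone (X : Config) : Antitone (Nballs X) := by
  intro k k' hkk'
  unfold Nballs
  refine Summable.tsum_le_tsum_of_inj (fun i => ⟨i.1, le_trans hkk' i.2⟩)
    (fun a b hab => ?_) (fun c _ => zero_le) (fun b => le_rfl)
    (enat_summable _) (enat_summable _)
  simpa [Subtype.ext_iff] using hab

lemma Nballs_phi (X : Config) (ξ : ℕ) (j : ℤ) :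
    Nballs (Phi ξ X) j = Nballs X j + (if j ≤ Bpos X ξ then 1 else 0) := by
  unfold Nballs Phi
  rw [Summable.tsum_add (enat_summable _) (enat_summable _)]
  congr 1
  by_cases h : j ≤ Bpos X ξ
  · rw [if_pos h]
    have : ∀ i : {i : ℤ // j ≤ i}, (if (i : ℤ) = Bpos X ξ then (1 : ℕ∞) else 0)
        = (if i = (⟨Bpos X ξ, h⟩ : {i : ℤ // j ≤ i}) then (1 : ℕ∞) else 0) := by
      intro i; simp [Subtype.ext_iff]
    simp_rw [this]
    exact tsum_ite_eq _ 1
  · rw [if_neg h]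
    have : ∀ i : {i : ℤ // j ≤ i}, (if (i : ℤ) = Bpos X ξ then (1 : ℕ∞) else 0) = 0 := by
      intro i
      rw [if_neg]
      intro hi
      exact h (hi ▸ i.2)
    simp_rw [this]
    exact tsum_zero

lemma Nballs_lb (X : Config) (m : ℤ) (hm : ∀ j : ℤ, X j ≠ 0 ↔ j ≤ m) (j : ℤ) :
    ((m + 1 - j).toNat : ℕ∞) ≤ Nballs X j := by
  classical
  have hcard : ((Finset.Icc j m).card : ℕ∞) = ((m + 1 - j).toNat : ℕ∞) := by
    rw [Int.card_Icc]
  rw [← hcard]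
  set s : Finset {i : ℤ // j ≤ i} := (Finset.Icc j m).subtype (fun i => j ≤ i) with hs
  have hscard : s.card = (Finset.Icc j m).card := by
    rw [hs, Finset.card_subtype, Finset.filter_true_of_mem]
    intro x hx
    exact (Finset.mem_Icc.1 hx).1
  calc ((Finset.Icc j m).card : ℕ∞) = ∑ _i ∈ s, (1 : ℕ∞) := by
        simp [hscard]
    _ ≤ ∑ i ∈ s, X i := by
        refine Finset.sum_le_sum fun i hi => ?_
        have him : (i : ℤ) ≤ m := by
          have := Finset.mem_subtype.1 hi
          exact (Finset.mem_Icc.1 this).2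
        have : X i ≠ 0 := (hm i).2 him
        exact ENat.one_le_iff_ne_zero.2 this
    _ ≤ Nballs X j := Summable.sum_le_tsum s (fun i _ => zero_le) (enat_summable _)

lemma Bset_nonempty (X : Config) (m : ℤ) (hm : ∀ j : ℤ, X j ≠ 0 ↔ j ≤ m)
    {ξ : ℕ} (hξ : 1 ≤ ξ) : {j : ℤ | Nballs X j < (ξ : ℕ∞)}.Nonempty := by
  refine ⟨m + 1, ?_⟩
  have h0 : Nballs X (m + 1) = 0 := by
    unfold Nballs
    have : ∀ i : {i : ℤ // m + 1 ≤ i}, X i = 0 := by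
      intro i
      by_contra h
      have := (hm i).1 h
      omega
    simp_rw [this]
    exact tsum_zero
  rw [Set.mem_setOf_eq, h0]
  exact_mod_cast Nat.pos_of_ne_zero (by omega)

lemma Bset_bddBelow (X : Config) (m : ℤ) (hm : ∀ j : ℤ, X j ≠ 0 ↔ j ≤ m)
    (ξ : ℕ) : BddBelow {j : ℤ | Nballs X j < (ξ : ℕ∞)} := by
  refine ⟨m + 2 - ξ, fun j hj => ?_⟩
  by_contra hlt
  push_neg at hlt
  have hj' : (ξ : ℤ) ≤ m + 1 - j := by omega
  have h1 : (ξ : ℕ∞) ≤ ((m + 1 - j).toNat : ℕ∞) := by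
    have : ξ ≤ (m + 1 - j).toNat := by omega
    exact_mod_cast this
  exact absurd (h1.trans (Nballs_lb X m hm j)) (not_le.2 hj)

lemma Bset_mono_X {X Y : Config} (hXY : ConfLE X Y) (ξ : ℕ) :
    {j : ℤ | Nballs Y j < (ξ : ℕ∞)} ⊆ {j : ℤ | Nballs X j < (ξ : ℕ∞)} :=
  fun j hj => lt_of_le_of_lt (hXY j) hj

lemma Bpos_le {X Y : Config} (mX mY : ℤ) (hmX : ∀ j : ℤ, X j ≠ 0 ↔ j ≤ mX)
    (hmY : ∀ j : ℤ, Y j ≠ 0 ↔ j ≤ mY) (hXY : ConfLE X Y)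
    {n n' : ℕ} (hn : 1 ≤ n) (hnn' : n ≤ n') :
    Bpos X n' ≤ Bpos Y n := by
  have h1 : Bpos X n' ≤ Bpos Y n' :=
    csInf_le_csInf (Bset_bddBelow X mX hmX n')
      (Bset_nonempty Y mY hmY (le_trans hn hnn')) (Bset_mono_X hXY n')
  have h2 : Bpos Y n' ≤ Bpos Y n := by
    refine csInf_le_csInf (Bset_bddBelow Y mY hmY n') (Bset_nonempty Y mY hmY hn) ?_
    intro j hj
    simp only [Set.mem_setOf_eq] at hj ⊢
    exact hj.trans_le (by exact_mod_cast hnn')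
  exact h1.trans h2


/-- Monotonicity of the moves: increasing in the configuration, decreasing in ξ. -/
theorem phiE_monotone (X Y : Config) (hX : IsAdmissible X) (hY : IsAdmissible Y)
    (hXY : ConfLE X Y) (ξ ξ' : ℕ∞) (hξ : 1 ≤ ξ) (hξξ' : ξ ≤ ξ') :
    ConfLE (PhiE ξ' X) (PhiE ξ Y) := by
  obtain ⟨⟨mX, hmX⟩, -⟩ := hX
  obtain ⟨⟨mY, hmY⟩, -⟩ := hY
  intro j
  by_cases hξ' : ξ' = ⊤
  · subst hξ'
    simp only [PhiE, if_pos rfl]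
    by_cases hξt : ξ = ⊤
    · subst hξt; simp only [if_pos rfl]; exact hXY j
    · rw [if_neg hξt, Nballs_phi]
      exact le_trans (hXY j) (le_add_right le_rfl)
  · have hξt : ξ ≠ ⊤ := fun h => hξ' (top_le_iff.1 (h ▸ hξξ'))
    lift ξ to ℕ using hξt with n
    lift ξ' to ℕ using hξ' with n'
    have hn1 : 1 ≤ n := by exact_mod_cast hξ
    have hnn' : n ≤ n' := by exact_mod_cast hξξ'
    simp only [PhiE, if_neg (ENat.coe_ne_top n), if_neg (ENat.coe_ne_top n'),
      ENat.toNat_coe]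
    rw [Nballs_phi, Nballs_phi]
    refine add_le_add (hXY j) ?_
    have hB : Bpos X n' ≤ Bpos Y n := Bpos_le mX mY hmX hmY hXY hn1 hnn'
    by_cases h : j ≤ Bpos X n'
    · rw [if_pos h, if_pos (h.trans hB)]
    · rw [if_neg h]; exact zero_le
end

section
/- For any word α = (α_1,…,α_l) of positive integers with l > H(α) + 1 (where H(α) = Σ α_i − l is the height), there exists a position n ≥ 2 at which α has a renovation event, i.e. α_{n+k} ≤ k+1 for all 0 ≤ k ≤ l−n. -/
/-!
Write `S t` for the sum of the first `t` letters. The hypothesis says `2 * l > S l + 1`, while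
`2 * 1 ≤ S 1 + 1` since letters are positive. Let `m` be the last `t ≤ l` with `2 * t ≤ S t + 1`;
then `1 ≤ m < l`, and `n = m + 1` is a renovation event: since every letter is at least `1`,
`S (m + k) ≥ S m + k`, so the letter at position `m + k` is at most
`S (m + k + 1) - S m - k < 2 * (m + k + 1) - 1 - (2 * m - 1) - k = k + 2`.
-/

namespace List

theorem sum_take_add_le_sum_take {α : List ℕ} (hα : ∀ a ∈ α, 1 ≤ a) {i k : ℕ}
    (hik : i + k ≤ α.length) : (α.take i).sum + k ≤ (α.take (i + k)).sum := by
  have hmid : ((α.drop i).take k).length ≤ ((α.drop i).take k).sum :=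
    length_le_sum_of_one_le _ fun a ha => hα a (mem_of_mem_drop (mem_of_mem_take ha))
  rw [take_add, sum_append]
  simp only [length_take, length_drop] at hmid
  omega

theorem getD_add_le_of_sum_take {α : List ℕ} (hα : ∀ a ∈ α, 1 ≤ a) {m k : ℕ}
    (hmk : m + k < α.length) (hm : 2 * m ≤ (α.take m).sum + 1)
    (hmk' : (α.take (m + k + 1)).sum + 1 < 2 * (m + k + 1)) :
    α.getD (m + k) 0 ≤ k + 1 := by
  have hprefix := sum_take_add_le_sum_take hα hmk.le
  rw [sum_take_succ α (m + k) hmk] at hmk'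
  rw [getD_eq_getElem α 0 hmk]
  omega

end List

/-- Any word α of positive integers with L(α) > H(α) + 1 (i.e. Σ α_i + 1 < 2 L(α),
where the height is H(α) = Σ α_i − L(α)) has a renovation event at some position
n ≥ 2, i.e. α_{n+k} ≤ k+1 for all 0 ≤ k ≤ L(α) − n. -/
theorem renovation_of_length_gt_height (α : List ℕ) (hα : ∀ a ∈ α, 1 ≤ a)
    (h : α.sum + 1 < 2 * α.length) :
    ∃ n : ℕ, 2 ≤ n ∧ n ≤ α.length ∧
      ∀ k : ℕ, k ≤ α.length - n → α.getD (n + k - 1) 0 ≤ k + 1 := by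
  classical
  set P : ℕ → Prop := fun t => 2 * t ≤ (α.take t).sum + 1
  have hP1 : P 1 := by
    simpa [P] using List.sum_take_add_le_sum_take hα (i := 0) (k := 1) (by omega)
  have hPl : ¬P α.length := by simpa [P] using h
  set m := Nat.findGreatest P α.length
  have hm1 : 1 ≤ m := Nat.le_findGreatest (by omega) hP1
  have hPm : P m := Nat.findGreatest_spec (by omega) hP1
  have hml : m < α.length :=
    (Nat.findGreatest_le _).lt_of_ne fun hm => hPl (hm ▸ hPm)
  refine ⟨m + 1, by omega, hml, fun k hk => ?_⟩
  have hPmk : ¬P (m + k + 1) :=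
    Nat.findGreatest_is_greatest (n := α.length) (by omega) (by omega)
  rw [show m + 1 + k - 1 = m + k by omega]
  exact List.getD_add_le_of_sum_take hα (by omega) hPm (not_le.mp hPmk)
end

section
/- For p > 1/2, the series Σ_{h≥0} Σ_{l=0}^{h} p^l (1−p)^h · C(h+l, l) converges. -/
/-!
Bounding `C(h+l, l) ≤ 2^(h+l)` turns the `l`-th term into `(2p)^l (2(1-p))^h`, and since `2p ≥ 1`
and `l ≤ h` this is at most `(4p(1-p))^h`. As `4p(1-p) = 1 - (2p-1)^2 < 1`, the series is
dominated by `∑ (h+1) (4p(1-p))^h`.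
-/

lemma four_mul_mul_one_sub_lt_one {p : ℝ} (hp : p ≠ 1 / 2) : 4 * p * (1 - p) < 1 := by
  have : 0 < (2 * p - 1) ^ 2 := sq_pos_of_ne_zero (by intro h; apply hp; linarith)
  nlinarith

lemma pow_mul_pow_mul_choose_le {p q : ℝ} (hp : 1 / 2 ≤ p) (hq : 0 ≤ q) {h l : ℕ} (hl : l ≤ h) :
    p ^ l * q ^ h * ((h + l).choose l : ℝ) ≤ (4 * p * q) ^ h := by
  have hchoose : ((h + l).choose l : ℝ) ≤ 2 ^ (h + l) := by
    exact_mod_cast Nat.choose_le_two_pow (h + l) l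
  calc p ^ l * q ^ h * ((h + l).choose l : ℝ)
      ≤ p ^ l * q ^ h * 2 ^ (h + l) := by gcongr
    _ = (2 * p) ^ l * (2 * q) ^ h := by rw [pow_add, mul_pow, mul_pow]; ring
    _ ≤ (2 * p) ^ h * (2 * q) ^ h := by gcongr; linarith
    _ = (4 * p * q) ^ h := by rw [← mul_pow]; ring

lemma summable_succ_mul_geometric {r : ℝ} (hr₀ : 0 ≤ r) (hr₁ : r < 1) :
    Summable (fun n : ℕ => ((n : ℝ) + 1) * r ^ n) := by
  have hlin := summable_pow_mul_geometric_of_norm_lt_one 1 (by rwa [Real.norm_of_nonneg hr₀])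
  simpa only [pow_one, add_mul, one_mul] using hlin.add (summable_geometric_of_lt_one hr₀ hr₁)

/-- For p > 1/2, the series Σ_{h≥0} Σ_{l=0}^h p^l (1-p)^h C(h+l, l) converges. -/
theorem summable_words_series (p : ℝ) (hp : 1 / 2 < p) (hp1 : p ≤ 1) :
    Summable (fun h : ℕ =>
      ∑ l ∈ Finset.range (h + 1), p ^ l * (1 - p) ^ h * ((h + l).choose l : ℝ)) := by
  have hq : 0 ≤ 1 - p := by linarith
  have hr₀ : 0 ≤ 4 * p * (1 - p) := by positivity
  have hr₁ := four_mul_mul_one_sub_lt_one hp.ne'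
  refine (summable_succ_mul_geometric hr₀ hr₁).of_nonneg_of_le
    (fun h => Finset.sum_nonneg fun l _ => by positivity) fun h => ?_
  calc ∑ l ∈ Finset.range (h + 1), p ^ l * (1 - p) ^ h * ((h + l).choose l : ℝ)
      ≤ ∑ _l ∈ Finset.range (h + 1), (4 * p * (1 - p)) ^ h :=
        Finset.sum_le_sum fun l hl =>
          pow_mul_pow_mul_choose_le hp.le hq (Nat.lt_succ_iff.mp (Finset.mem_range.mp hl))
    _ = ((h : ℝ) + 1) * (4 * p * (1 - p)) ^ h := by
        rw [Finset.sum_const, Finset.card_range, nsmul_eq_mul, Nat.cast_succ]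
end
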